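/- arXiv:0905.3281 — 2 statements merged into one kernel-verified Lean document; each statement's English description precedes it below -/
import Mathlib

section
/- Let G be a finite simple graph of order n ≥ 1 and let l = min { j : d(G,j) = C(n,j) } (this minimum exists since the full vertex set is dominating). Then the minimum degree of G equals n − l, i.e., δ(G) = n − l. -/
/-- `S` is a dominating set of `G`: every vertex not in `S` is adjacent to some vertex of `S`. -/
def IsDomSet {V : Type*} (G : SimpleGraph V) (S : Finset V) : Prop :=
  ∀ v : V, v ∉ S → ∃ u ∈ S, G.Adj u v

/-- `d(G,i)`: the number of dominating sets of `G` of cardinality `i`. -/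
noncomputable def domCount {V : Type*} (G : SimpleGraph V) (i : ℕ) : ℕ :=
  {S : Finset V | IsDomSet G S ∧ S.card = i}.ncard

/-- `d_v(G,i)`: the number of dominating sets of `G` of cardinality `i` containing `v`. -/
noncomputable def domCountVert {V : Type*} (G : SimpleGraph V) (v : V) (i : ℕ) : ℕ :=
  {S : Finset V | IsDomSet G S ∧ S.card = i ∧ v ∈ S}.ncard

/-! A set of size `j` fails to dominate exactly when it avoids some closed neighbourhood
`N[v]`, and such a set exists iff `j ≤ n - (deg v + 1)`. Hence every `j`-set dominates iff
`n - deg v ≤ j` for all `v`, i.e. iff `n - δ(G) ≤ j`, so the least such `j` is `n - δ(G)`. -/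

open Finset SimpleGraph

section

variable {V : Type*} [Fintype V]

lemma domCount_eq_choose_iff (G : SimpleGraph V) (j : ℕ) :
    domCount G j = (Fintype.card V).choose j ↔ ∀ S : Finset V, #S = j → IsDomSet G S := by
  classical
  have hset : {S : Finset V | IsDomSet G S ∧ #S = j} =
      ((powersetCard j univ).filter (IsDomSet G) : Set (Finset V)) := by
    ext S
    simp [and_comm]
  rw [domCount, hset, Set.ncard_coe_finset, ← card_univ, ← card_powersetCard, card_filter_eq_iff]
  simp

lemma forall_card_sub_degree_le_iff (G : SimpleGraph V) [DecidableRel G.Adj] (j : ℕ) :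
    (∀ v, Fintype.card V - G.degree v ≤ j) ↔ Fintype.card V - G.minDegree ≤ j := by
  refine ⟨fun h ↦ ?_, fun h v ↦ (Nat.sub_le_sub_left (G.minDegree_le_degree v) _).trans h⟩
  cases isEmpty_or_nonempty V
  · simp
  · obtain ⟨v, hv⟩ := G.exists_minimal_degree_vertex
    exact hv ▸ h v

lemma SimpleGraph.minDegree_le_card (G : SimpleGraph V) [DecidableRel G.Adj] :
    G.minDegree ≤ Fintype.card V := by
  cases isEmpty_or_nonempty V
  · simp [minDegree_of_subsingleton]
  · exact G.minDegree_lt_card.le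

variable [DecidableEq V] (G : SimpleGraph V) [DecidableRel G.Adj]

lemma not_isDomSet_iff {S : Finset V} :
    ¬ IsDomSet G S ↔ ∃ v, S ⊆ (insert v (G.neighborFinset v))ᶜ := by
  simp only [IsDomSet, not_forall, exists_prop, not_exists, not_and, subset_iff, mem_compl,
    mem_insert, mem_neighborFinset, not_or]
  exact exists_congr fun v ↦
    ⟨fun ⟨hv, h⟩ u hu ↦ ⟨ne_of_mem_of_not_mem hu hv, fun huv ↦ h u hu huv.symm⟩,
      fun h ↦ ⟨fun hv ↦ (h hv).1 rfl, fun u hu huv ↦ (h hu).2 huv.symm⟩⟩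

lemma card_compl_insert_neighborFinset (v : V) :
    #(insert v (G.neighborFinset v))ᶜ = Fintype.card V - (G.degree v + 1) := by
  rw [card_compl, card_insert_of_notMem (by simp), card_neighborFinset_eq_degree]

lemma forall_isDomSet_card_eq_iff (j : ℕ) :
    (∀ S : Finset V, #S = j → IsDomSet G S) ↔ ∀ v, Fintype.card V - G.degree v ≤ j := by
  constructor
  · intro h v
    by_contra! hv
    obtain ⟨S, hS, hSj⟩ := exists_subset_card_eq (s := (insert v (G.neighborFinset v))ᶜ) (n := j)
      (by rw [card_compl_insert_neighborFinset]; omega)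
    exact (not_isDomSet_iff G).2 ⟨v, hS⟩ (h S hSj)
  · intro h S hSj
    by_contra hS
    obtain ⟨v, hv⟩ := (not_isDomSet_iff G).1 hS
    have hcard := card_le_card hv
    rw [card_compl_insert_neighborFinset, hSj] at hcard
    have := h v
    have := G.degree_lt_card_verts v
    omega

end

theorem minDegree_eq_card_sub_sInf_general {V : Type*} [Fintype V] (G : SimpleGraph V)
    [DecidableRel G.Adj] (l : ℕ)
    (hl : l = sInf {j : ℕ | domCount G j = (Fintype.card V).choose j}) :
    G.minDegree = Fintype.card V - l := by
  classical
  have hset : {j | domCount G j = (Fintype.card V).choose j} =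
      Set.Ici (Fintype.card V - G.minDegree) := by
    ext j
    rw [Set.mem_ofPred_eq, domCount_eq_choose_iff, forall_isDomSet_card_eq_iff,
      forall_card_sub_degree_le_iff, Set.mem_Ici]
  rw [hl, hset, csInf_Ici, Nat.sub_sub_self G.minDegree_le_card]

theorem minDegree_eq_card_sub_sInf {V : Type*} [Fintype V] [Nonempty V] (G : SimpleGraph V)
    [DecidableRel G.Adj] (l : ℕ)
    (hl : l = sInf {j : ℕ | domCount G j = (Fintype.card V).choose j}) :
    G.minDegree = Fintype.card V - l :=
  minDegree_eq_card_sub_sInf_general G l hl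
end

section
/- Let G be a finite simple graph of order n ≥ 1 and let l = min { j : d(G,j) = C(n,j) }. Then G has at least C(n, l−1) − d(G, l−1) vertices of degree δ(G) = n − l. -/
/-!
A set fails to dominate exactly when it misses some closed neighbourhood `N[v]`, i.e. lies in
`N[v]ᶜ`, which has `n - deg v - 1 ≤ n - δ - 1` elements. Hence every set of size at least `n - δ`
dominates, while `N[w]ᶜ` for a vertex `w` of minimum degree contains non-dominating sets of every
size below `n - δ`; so `l = n - δ`. A non-dominating set of size `l - 1 = n - δ - 1` must then be
all of `N[v]ᶜ` for a vertex `v` of degree `δ`, and there are `C(n, l - 1) - d(G, l - 1)` of them.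
-/

open Finset

namespace SimpleGraph

lemma domCount_add_ncard_not_isDomSet {V : Type*} [Fintype V] (G : SimpleGraph V) (j : ℕ) :
    domCount G j + {S : Finset V | ¬ IsDomSet G S ∧ #S = j}.ncard = (Fintype.card V).choose j := by
  have hsplit : {S : Finset V | #S = j}
      = {S | IsDomSet G S ∧ #S = j} ∪ {S | ¬ IsDomSet G S ∧ #S = j} := by
    ext S; by_cases h : IsDomSet G S <;> simp [h]
  have hdisj : Disjoint {S : Finset V | IsDomSet G S ∧ #S = j}
      {S : Finset V | ¬ IsDomSet G S ∧ #S = j} :=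
    Set.disjoint_left.mpr fun _ h1 h2 => h2.1 h1.1
  have hall : {S : Finset V | #S = j} = ↑(powersetCard j (univ : Finset V)) := by
    ext S; simp [mem_powersetCard]
  rw [domCount, ← Set.ncard_union_eq hdisj, ← hsplit, hall, Set.ncard_coe_finset,
    card_powersetCard, card_univ]

variable {V : Type*} [Fintype V] [DecidableEq V] (G : SimpleGraph V) [DecidableRel G.Adj]

def closedNeighborFinset (v : V) : Finset V := insert v (G.neighborFinset v)

lemma card_compl_closedNeighborFinset (v : V) :
    #(G.closedNeighborFinset v)ᶜ = Fintype.card V - (G.degree v + 1) := by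
  rw [card_compl, closedNeighborFinset, card_insert_of_notMem (by simp),
    card_neighborFinset_eq_degree]

lemma not_isDomSet_iff {S : Finset V} :
    ¬ IsDomSet G S ↔ ∃ v, S ⊆ (G.closedNeighborFinset v)ᶜ := by
  simp only [IsDomSet, closedNeighborFinset, not_forall, not_exists, not_and, subset_iff,
    mem_compl, mem_insert, mem_neighborFinset, not_or, exists_prop]
  refine exists_congr fun v => ⟨fun ⟨hv, h⟩ u hu => ⟨?_, fun huv => h u hu huv.symm⟩,
    fun h => ⟨fun hv => (h hv).1 rfl, fun u hu huv => (h hu).2 huv.symm⟩⟩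
  rintro rfl
  exact hv hu

lemma isDomSet_of_card_le {S : Finset V} (h : Fintype.card V - G.minDegree ≤ #S) :
    IsDomSet G S := by
  by_contra hS
  obtain ⟨v, hv⟩ := G.not_isDomSet_iff.mp hS
  have := card_le_card hv
  rw [card_compl_closedNeighborFinset] at this
  have := G.minDegree_le_degree v
  have := G.degree_lt_card_verts v
  omega

lemma exists_not_isDomSet_of_lt [Nonempty V] {j : ℕ} (h : j < Fintype.card V - G.minDegree) :
    ∃ S : Finset V, ¬ IsDomSet G S ∧ #S = j := by
  obtain ⟨w, hw⟩ := G.exists_minimal_degree_vertex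
  obtain ⟨S, hS, hcard⟩ := exists_subset_card_eq (s := (G.closedNeighborFinset w)ᶜ) (n := j)
    (by rw [card_compl_closedNeighborFinset, ← hw]; omega)
  exact ⟨S, G.not_isDomSet_iff.mpr ⟨w, hS⟩, hcard⟩

lemma domCount_eq_choose_iff [Nonempty V] {j : ℕ} :
    domCount G j = (Fintype.card V).choose j ↔ Fintype.card V - G.minDegree ≤ j := by
  have hsplit := G.domCount_add_ncard_not_isDomSet j
  constructor
  · intro h
    by_contra! hj
    obtain ⟨S, hS⟩ := G.exists_not_isDomSet_of_lt hj
    have : 0 < {S : Finset V | ¬ IsDomSet G S ∧ #S = j}.ncard := (Set.ncard_pos).mpr ⟨S, hS⟩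
    omega
  · intro hj
    have : {S : Finset V | ¬ IsDomSet G S ∧ #S = j} = ∅ :=
      Set.eq_empty_of_forall_notMem fun S ⟨hS, hcard⟩ =>
        hS (G.isDomSet_of_card_le (hcard ▸ hj))
    rw [this, Set.ncard_empty] at hsplit
    omega

lemma sInf_domCount_eq_choose [Nonempty V] :
    sInf {j : ℕ | domCount G j = (Fintype.card V).choose j} = Fintype.card V - G.minDegree := by
  have hIci : {j : ℕ | domCount G j = (Fintype.card V).choose j} =
      Set.Ici (Fintype.card V - G.minDegree) :=
    Set.ext fun _ => G.domCount_eq_choose_iff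
  rw [hIci, csInf_Ici]

lemma ncard_not_isDomSet_le_card_minDegree_vertices :
    {S : Finset V | ¬ IsDomSet G S ∧ #S = Fintype.card V - G.minDegree - 1}.ncard ≤
      #{v | G.degree v = G.minDegree} := by
  have hsub : {S : Finset V | ¬ IsDomSet G S ∧ #S = Fintype.card V - G.minDegree - 1} ⊆
      (fun v => (G.closedNeighborFinset v)ᶜ) '' ↑({v | G.degree v = G.minDegree} : Finset V) := by
    rintro S ⟨hS, hcard⟩
    obtain ⟨v, hv⟩ := G.not_isDomSet_iff.mp hS
    have hcompl := G.card_compl_closedNeighborFinset v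
    have := G.minDegree_le_degree v
    have := G.degree_lt_card_verts v
    have hSv : S = (G.closedNeighborFinset v)ᶜ := eq_of_subset_of_card_le hv (by omega)
    have hdeg : G.degree v = G.minDegree := by
      rw [hSv, hcompl] at hcard
      omega
    exact ⟨v, by simpa using hdeg, hSv.symm⟩
  calc _ ≤ _ := Set.ncard_le_ncard hsub
    _ ≤ _ := Set.ncard_image_le
    _ = _ := Set.ncard_coe_finset _

end SimpleGraph

theorem card_minDegree_vertices_ge {V : Type*} [Fintype V] [Nonempty V] (G : SimpleGraph V)
    [DecidableRel G.Adj] (l : ℕ)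
    (hl : l = sInf {j : ℕ | domCount G j = (Fintype.card V).choose j}) :
    G.minDegree = Fintype.card V - l ∧
    (Fintype.card V).choose (l - 1) - domCount G (l - 1) ≤
      (Finset.univ.filter fun v : V => G.degree v = G.minDegree).card := by
  classical
  rw [G.sInf_domCount_eq_choose] at hl
  subst hl
  have hδ := G.minDegree_lt_card
  refine ⟨by omega, ?_⟩
  have hsplit := G.domCount_add_ncard_not_isDomSet (Fintype.card V - G.minDegree - 1)
  have hle := G.ncard_not_isDomSet_le_card_minDegree_vertices
  omega
end
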